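/- Let X be a nonzero real Banach space which is an ai-ideal in every superspace, i.e., for every real Banach space Z and every isometric linear embedding of X into Z, the image of X is an ai-ideal in Z (by a theorem of Abrahamsen–Lima–Nygaard this property characterizes the Gurariĭ spaces). Then T(X) = 2 and t(X) = 1. -/

import Mathlib

/-- The thinness index `t(X)` of a normed space. -/
noncomputable def thinness (X : Type*) [NormedAddCommGroup X] : ℝ :=
  sInf {r : ℝ | 0 < r ∧ ∀ (n : ℕ) (x : Fin n → X), (∀ i, ‖x i‖ = 1) →
    ∀ ε : ℝ, 0 < ε → ∃ y : X, ‖y‖ = 1 ∧ ∀ i, ‖x i - y‖ < r + ε}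

/-- The thickness index `T(X)` of a normed space. -/
noncomputable def thickness (X : Type*) [NormedAddCommGroup X] : ℝ :=
  sInf {r : ℝ | 0 < r ∧ ∃ (n : ℕ) (x : Fin n → X), (∀ i, ‖x i‖ = 1) ∧
    Metric.closedBall (0 : X) 1 ⊆ ⋃ i, Metric.closedBall (x i) r}

/-- A subspace `Y` of `X` is an almost isometric ideal (ai-ideal) in `X`. -/
def IsAIIdeal (X : Type*) [NormedAddCommGroup X] [NormedSpace ℝ X]
    (Y : Subspace ℝ X) : Prop :=
  ∀ ε : ℝ, 0 < ε → ∀ E : Subspace ℝ X, FiniteDimensional ℝ E →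
    ∃ T : E →ₗ[ℝ] Y, (∀ e : E, (e : X) ∈ Y → ((T e : Y) : X) = (e : X)) ∧
      ∀ e : E, (1 + ε)⁻¹ * ‖(e : X)‖ ≤ ‖((T e : Y) : X)‖ ∧
        ‖((T e : Y) : X)‖ ≤ (1 + ε) * ‖(e : X)‖

/-!
Embed `X` isometrically into `X × ℝ` with the sup norm and with the `ℓ¹` norm, and let `e = (0, 1)`.
The ai-ideal property moves `e`, together with any finitely many `x₁, …, xₙ ∈ S_X`, into `X` by a
`(1 + ε)`-isometry fixing the `xᵢ`. In the sup norm `‖xᵢ - e‖ = 1`, so the image of `e` is an almost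
unit vector at distance at most about `1` from every `xᵢ`: hence `t(X) ≤ 1`. In the `ℓ¹` norm
`‖xᵢ - t e‖ = 1 + t`, so the image of `(1 + ε)⁻¹ e` is a point of `B_X` at distance almost `2` from
every `xᵢ`, and no finitely many balls of radius `< 2` centred on `S_X` cover `B_X`: hence
`T(X) ≥ 2`. The bounds `t(X) ≥ 1` and `T(X) ≤ 2` hold in every nonzero normed space.
-/

open Filter Topology

section

variable (p : ENNReal) [Fact (1 ≤ p)] (𝕜 E F : Type*) [NormedField 𝕜]
  [SeminormedAddCommGroup E] [NormedSpace 𝕜 E] [SeminormedAddCommGroup F] [NormedSpace 𝕜 F]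

noncomputable def LinearIsometry.withLpInl : E →ₗᵢ[𝕜] WithLp p (E × F) where
  toLinearMap := (WithLp.linearEquiv p 𝕜 (E × F)).symm.toLinearMap ∘ₗ LinearMap.inl 𝕜 E F
  norm_map' := WithLp.norm_toLp_fst p E F

@[simp]
theorem LinearIsometry.withLpInl_apply (x : E) :
    LinearIsometry.withLpInl p 𝕜 E F x = WithLp.toLp p (x, 0) :=
  rfl

end

theorem IsAIIdeal.exists_mem_forall_norm_sub {Z : Type*} [NormedAddCommGroup Z]
    [NormedSpace ℝ Z] {Y : Subspace ℝ Z} (hY : IsAIIdeal Z Y) {ε : ℝ} (hε : 0 < ε)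
    {ι : Type*} [Finite ι] {x : ι → Z} (hx : ∀ i, x i ∈ Y) (z : Z) :
    ∃ y ∈ Y, ((1 + ε)⁻¹ * ‖z‖ ≤ ‖y‖ ∧ ‖y‖ ≤ (1 + ε) * ‖z‖) ∧
      ∀ i, (1 + ε)⁻¹ * ‖x i - z‖ ≤ ‖x i - y‖ ∧ ‖x i - y‖ ≤ (1 + ε) * ‖x i - z‖ := by
  let E := Submodule.span ℝ (insert z (Set.range x))
  obtain ⟨T, hT_fix, hT_norm⟩ :=
    hY ε hε E (FiniteDimensional.span_of_finite ℝ ((Set.finite_range x).insert z))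
  let z' : E := ⟨z, Submodule.subset_span (Set.mem_insert _ _)⟩
  let x' (i : ι) : E :=
    ⟨x i, Submodule.subset_span (Set.mem_insert_of_mem _ (Set.mem_range_self i))⟩
  refine ⟨T z', (T z').2, hT_norm z', fun i => ?_⟩
  have h_sub : ((T (x' i - z') : Y) : Z) = x i - T z' := by
    rw [map_sub, Submodule.coe_sub, hT_fix (x' i) (hx i)]
  rw [← h_sub]
  exact hT_norm (x' i - z')

theorem IsAIIdeal.exists_forall_norm_sub_of_range {X Z : Type*} [NormedAddCommGroup X]
    [NormedSpace ℝ X] [NormedAddCommGroup Z] [NormedSpace ℝ Z] {J : X →ₗᵢ[ℝ] Z}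
    (hJ : IsAIIdeal Z (LinearMap.range J.toLinearMap)) {ε : ℝ} (hε : 0 < ε)
    {ι : Type*} [Finite ι] (x : ι → X) (z : Z) :
    ∃ y : X, ((1 + ε)⁻¹ * ‖z‖ ≤ ‖y‖ ∧ ‖y‖ ≤ (1 + ε) * ‖z‖) ∧
      ∀ i, (1 + ε)⁻¹ * ‖J (x i) - z‖ ≤ ‖x i - y‖ ∧ ‖x i - y‖ ≤ (1 + ε) * ‖J (x i) - z‖ := by
  obtain ⟨_, ⟨y, rfl⟩, hy, hxy⟩ :=
    hJ.exists_mem_forall_norm_sub hε (x := fun i => J (x i)) (fun i => ⟨x i, rfl⟩) z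
  refine ⟨y, ?_, fun i => ?_⟩
  · simpa using hy
  · simpa [← map_sub] using hxy i

theorem exists_norm_eq_one_forall_norm_sub_le {X : Type*} [NormedAddCommGroup X]
    [NormedSpace ℝ X]
    (hX : IsAIIdeal (X × ℝ) (LinearMap.range (LinearIsometry.inl ℝ X ℝ).toLinearMap))
    {ι : Type*} [Finite ι] {x : ι → X} (hx : ∀ i, ‖x i‖ = 1) {r : ℝ} (hr : 1 < r) :
    ∃ y : X, ‖y‖ = 1 ∧ ∀ i, ‖x i - y‖ ≤ r := by
  obtain ⟨δ, hδ, rfl⟩ : ∃ δ, 0 < δ ∧ r = 1 + 2 * δ := ⟨(r - 1) / 2, by linarith, by ring⟩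
  obtain ⟨y, ⟨hy_ge, hy_le⟩, hxy⟩ := hX.exists_forall_norm_sub_of_range hδ x ((0 : X), (1 : ℝ))
  simp only [LinearIsometry.inl_apply, Prod.mk_sub_mk, sub_zero, zero_sub, Prod.norm_def,
    norm_zero, norm_neg, norm_one, hx, zero_le_one, max_eq_right, max_self, mul_one]
    at hy_ge hy_le hxy
  have hy : y ≠ 0 := norm_pos_iff.1 (lt_of_lt_of_le (by positivity) hy_ge)
  have h_unit : ‖‖y‖⁻¹ • y‖ = 1 := by
    rw [norm_smul, norm_inv, norm_norm, inv_mul_cancel₀ (norm_ne_zero_iff.2 hy)]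
  have h_normalize : ‖y - ‖y‖⁻¹ • y‖ ≤ δ := by
    have : 1 - δ ≤ (1 + δ)⁻¹ := by
      rw [← one_div, le_div_iff₀ (by linarith)]
      nlinarith
    rw [(SameRay.sameRay_nonneg_smul_right y (inv_nonneg.2 (norm_nonneg y))).norm_sub, h_unit,
      abs_le]
    constructor <;> linarith
  refine ⟨‖y‖⁻¹ • y, h_unit, fun i => ?_⟩
  calc ‖x i - ‖y‖⁻¹ • y‖ ≤ ‖x i - y‖ + ‖y - ‖y‖⁻¹ • y‖ := norm_sub_le_norm_sub_add_norm_sub _ _ _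
    _ ≤ (1 + δ) + δ := add_le_add (hxy i).2 h_normalize
    _ = 1 + 2 * δ := by ring

theorem exists_norm_le_one_forall_lt_norm_sub {X : Type*} [NormedAddCommGroup X]
    [NormedSpace ℝ X]
    (hX : IsAIIdeal (WithLp 1 (X × ℝ))
      (LinearMap.range (LinearIsometry.withLpInl 1 ℝ X ℝ).toLinearMap))
    {ι : Type*} [Finite ι] {x : ι → X} (hx : ∀ i, ‖x i‖ = 1) {r : ℝ} (hr : r < 2) :
    ∃ w : X, ‖w‖ ≤ 1 ∧ ∀ i, r < ‖x i - w‖ := by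
  have h_lim : Tendsto (fun δ : ℝ => (1 + δ)⁻¹ * (1 + (1 + δ)⁻¹)) (𝓝[>] 0) (𝓝 2) := by
    have : ContinuousAt (fun δ : ℝ => (1 + δ)⁻¹ * (1 + (1 + δ)⁻¹)) 0 := by
      fun_prop (disch := norm_num)
    convert this.tendsto.mono_left nhdsWithin_le_nhds using 2
    norm_num
  obtain ⟨δ, hδr, hδ : 0 < δ⟩ :=
    ((h_lim.eventually (lt_mem_nhds hr)).and self_mem_nhdsWithin).exists
  have h_scale : 0 < 1 + δ := by linarith
  obtain ⟨w, ⟨-, hw⟩, hxw⟩ :=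
    hX.exists_forall_norm_sub_of_range hδ x (WithLp.toLp 1 ((0 : X), (1 + δ)⁻¹))
  have h_dist (i) : ‖LinearIsometry.withLpInl 1 ℝ X ℝ (x i) - WithLp.toLp 1 (0, (1 + δ)⁻¹)‖ =
      1 + (1 + δ)⁻¹ := by
    rw [LinearIsometry.withLpInl_apply, ← WithLp.toLp_sub, Prod.mk_sub_mk,
      WithLp.prod_norm_eq_of_L1]
    simp [hx i, h_scale.le]
  refine ⟨w, ?_, fun i => hδr.trans_le ?_⟩
  · rwa [WithLp.norm_toLp_snd, Real.norm_of_nonneg (inv_nonneg.2 h_scale.le),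
      mul_inv_cancel₀ h_scale.ne'] at hw
  · simpa only [h_dist] using (hxw i).1

theorem thickness_eq_two {X : Type*} [NormedAddCommGroup X] [NormedSpace ℝ X] [Nontrivial X]
    (h : ∀ (n : ℕ) (x : Fin n → X), (∀ i, ‖x i‖ = 1) →
      ∀ r < 2, ∃ w : X, ‖w‖ ≤ 1 ∧ ∀ i, r < ‖x i - w‖) :
    thickness X = 2 := by
  obtain ⟨x₀, hx₀⟩ := exists_norm_eq X zero_le_one
  refine IsLeast.csInf_eq ⟨⟨two_pos, 1, fun _ => x₀, fun _ => hx₀, fun y hy => ?_⟩, ?_⟩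
  · refine Set.mem_iUnion.2 ⟨0, Metric.closedBall_subset_closedBall' ?_ hy⟩
    rw [dist_zero_left, hx₀]
    norm_num
  · rintro r ⟨-, n, x, hx, h_cover⟩
    by_contra! hr
    obtain ⟨w, hw, h_far⟩ := h n x hx r hr
    obtain ⟨i, hi⟩ := Set.mem_iUnion.1 (h_cover (mem_closedBall_zero_iff.2 hw))
    rw [Metric.mem_closedBall, dist_eq_norm, norm_sub_rev] at hi
    exact (h_far i).not_ge hi

theorem thinness_eq_one {X : Type*} [NormedAddCommGroup X] [NormedSpace ℝ X] [Nontrivial X]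
    (h : ∀ (n : ℕ) (x : Fin n → X), (∀ i, ‖x i‖ = 1) →
      ∀ r, 1 < r → ∃ y : X, ‖y‖ = 1 ∧ ∀ i, ‖x i - y‖ ≤ r) :
    thinness X = 1 := by
  have h_mem {r : ℝ} (hr : 1 < r) : r ∈ {r : ℝ | 0 < r ∧ ∀ (n : ℕ) (x : Fin n → X),
      (∀ i, ‖x i‖ = 1) → ∀ ε : ℝ, 0 < ε → ∃ y : X, ‖y‖ = 1 ∧ ∀ i, ‖x i - y‖ < r + ε} :=
    ⟨by linarith, fun n x hx ε hε => (h n x hx r hr).imp fun _ ⟨hy, hxy⟩ =>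
      ⟨hy, fun i => (hxy i).trans_lt (lt_add_of_pos_right r hε)⟩⟩
  refine csInf_eq_of_forall_ge_of_forall_gt_exists_lt ⟨2, h_mem one_lt_two⟩ ?_
    fun w hw => ⟨(1 + w) / 2, h_mem (by linarith), by linarith⟩
  rintro r ⟨-, hr⟩
  obtain ⟨x₀, hx₀⟩ := exists_norm_eq X zero_le_one
  refine le_of_forall_pos_lt_add fun ε hε => ?_
  obtain ⟨y, -, hy⟩ := hr 2 ![x₀, -x₀] (by simp [Fin.forall_fin_two, hx₀]) ε hε
  have h₀ := hy 0
  have h₁ := hy 1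
  simp only [Matrix.cons_val_zero, Matrix.cons_val_one] at h₀ h₁
  have h_two : ‖x₀ - -x₀‖ = 2 := by
    rw [sub_neg_eq_add, ← two_smul ℝ, norm_smul, hx₀]
    norm_num
  have h_tri := norm_sub_le_norm_sub_add_norm_sub x₀ y (-x₀)
  rw [h_two, norm_sub_rev y] at h_tri
  linarith

theorem thickness_thinness_of_aiIdeal_in_every_superspace
    (X : Type) [NormedAddCommGroup X] [NormedSpace ℝ X] [CompleteSpace X] [Nontrivial X]
    (hX : ∀ (Z : Type) [NormedAddCommGroup Z] [NormedSpace ℝ Z] [CompleteSpace Z]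
      (J : X →ₗᵢ[ℝ] Z), IsAIIdeal Z (LinearMap.range J.toLinearMap)) :
    thickness X = 2 ∧ thinness X = 1 :=
  ⟨thickness_eq_two fun _ _ hx _ hr => exists_norm_le_one_forall_lt_norm_sub (hX _ _) hx hr,
    thinness_eq_one fun _ _ hx _ hr => exists_norm_eq_one_forall_norm_sub_le (hX _ _) hx hr⟩
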